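/- Let f_t = f_{z_t,ẑ_t} for t ≥ 1 be instantaneous SGTSVM objectives, let (u_t) be generated by the SGTSVM iteration u_{t+1} = u_t − (1/t)∇_t where ∇_t is the subgradient vector of f_t at u_t, with ‖∇_t‖ ≤ G2 for all t, and suppose the sequence (u_t) converges in ℝ^d. Let u* be a minimizer of the TWSVM objective f. Then for every ε > 0 there exists T0 such that for all T ≥ T0, (1/T)·Σ_{t=1}^T f_t(u_t) ≤ (1/T)·Σ_{t=1}^T f_t(u*) + ε. -/

import Mathlib

open RealInnerProductSpace Finset Filter Topology

/-! Each `f_t` is convex with subgradient `∇_t` at `u_t`, so the regret `f_t(u_t) - f_t(u*)`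
is at most `⟪∇_t, u_t - u*⟫`. Expanding `‖u_{t+1} - u*‖²` along the step of length `1/t`
bounds this by `(t/2)(a_t - a_{t+1}) + G²/(2t)` with `a_t = ‖u_t - u*‖²`, and summation by
parts gives a total regret of at most `(∑_{t ≤ T} a_t - T a_{T+1})/2 + (G²/2) ∑_{t ≤ T} 1/t`.
Divided by `T`, this tends to `0`: since `u_t` converges, the Cesàro means of `a_t` and the
sequence `a_{T+1}` have the same limit, and the Cesàro means of `1/t` tend to `0`. -/

theorem half_mul_sq_sub_le {c : ℝ} (hc : 0 ≤ c) (a b : ℝ) :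
    c / 2 * a ^ 2 - c / 2 * b ^ 2 ≤ c * a * (a - b) := by
  nlinarith [mul_nonneg hc (sq_nonneg (a - b))]

theorem mul_max_zero_one_add_sub_le {c : ℝ} (hc : 0 ≤ c) (a b : ℝ) :
    c * max 0 (1 + a) - c * max 0 (1 + b) ≤ (if 0 < 1 + a then c else 0) * (a - b) := by
  split_ifs with ha
  · rw [max_eq_right ha.le]
    nlinarith [mul_le_mul_of_nonneg_left (le_max_right 0 (1 + b)) hc]
  · rw [max_eq_left (not_lt.mp ha)]
    nlinarith [mul_nonneg hc (le_max_left 0 (1 + b))]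

theorem sum_Icc_natCast_mul_sub_succ (a : ℕ → ℝ) (T : ℕ) :
    ∑ t ∈ Icc 1 T, (t : ℝ) * (a t - a (t + 1)) = ∑ t ∈ Icc 1 T, a t - T * a (T + 1) := by
  induction T with
  | zero => simp
  | succ n ih =>
    rw [← insert_Icc_right_eq_Icc_add_one (by omega), sum_insert (by simp),
      sum_insert (by simp), ih]
    push_cast
    ring

theorem Filter.Tendsto.cesaro_Icc {a : ℕ → ℝ} {ℓ : ℝ} (h : Tendsto a atTop (𝓝 ℓ)) :
    Tendsto (fun T : ℕ => (T : ℝ)⁻¹ * ∑ t ∈ Icc 1 T, a t) atTop (𝓝 ℓ) := by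
  refine (h.comp (tendsto_add_atTop_nat 1)).cesaro.congr fun T => ?_
  rw [← Ico_add_one_right_eq_Icc, sum_Ico_eq_sum_range]
  simp [add_comm]

section InnerProductSpace

variable {E : Type*} [NormedAddCommGroup E] [InnerProductSpace ℝ E]

theorem half_sq_norm_sub_le_inner (v x : E) :
    1 / 2 * ‖v‖ ^ 2 - 1 / 2 * ‖x‖ ^ 2 ≤ ⟪v, v - x⟫ := by
  rw [inner_sub_right, real_inner_self_eq_norm_sq]
  nlinarith [real_inner_le_norm v x, sq_nonneg (‖v‖ - ‖x‖)]

noncomputable def sgtsvmObjective (c1 c2 : ℝ) (z zh x : E) : ℝ :=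
  (1 / 2) * ‖x‖ ^ 2 + (c1 / 2) * ⟪x, z⟫ ^ 2 + c2 * max 0 (1 + ⟪x, zh⟫)

noncomputable def sgtsvmSubgradient (c1 c2 : ℝ) (z zh x : E) : E :=
  x + (c1 * ⟪x, z⟫) • z + (if 0 < 1 + ⟪x, zh⟫ then c2 else 0) • zh

theorem sgtsvmObjective_sub_le_inner {c1 c2 : ℝ} (hc1 : 0 ≤ c1) (hc2 : 0 ≤ c2)
    (z zh v x : E) :
    sgtsvmObjective c1 c2 z zh v - sgtsvmObjective c1 c2 z zh x
      ≤ ⟪sgtsvmSubgradient c1 c2 z zh v, v - x⟫ := by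
  have hz : ⟪z, v - x⟫ = ⟪v, z⟫ - ⟪x, z⟫ := by
    rw [inner_sub_right, real_inner_comm z, real_inner_comm z]
  have hzh : ⟪zh, v - x⟫ = ⟪v, zh⟫ - ⟪x, zh⟫ := by
    rw [inner_sub_right, real_inner_comm zh, real_inner_comm zh]
  simp only [sgtsvmObjective, sgtsvmSubgradient, inner_add_left, real_inner_smul_left, hz, hzh]
  linarith [half_sq_norm_sub_le_inner v x, half_mul_sq_sub_le hc1 ⟪v, z⟫ ⟪x, z⟫,
    mul_max_zero_one_add_sub_le hc2 ⟪v, zh⟫ ⟪x, zh⟫]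

theorem inner_le_of_gradient_step {η G : ℝ} (hη : 0 < η) {u₀ u₁ g : E}
    (hstep : u₁ = u₀ - η • g) (hg : ‖g‖ ≤ G) (w : E) :
    ⟪g, u₀ - w⟫ ≤ (‖u₀ - w‖ ^ 2 - ‖u₁ - w‖ ^ 2) / (2 * η) + η / 2 * G ^ 2 := by
  have hexpand :
      ‖u₁ - w‖ ^ 2 = ‖u₀ - w‖ ^ 2 - 2 * η * ⟪g, u₀ - w⟫ + η ^ 2 * ‖g‖ ^ 2 := by
    rw [hstep, sub_right_comm, norm_sub_sq_real, real_inner_smul_right, norm_smul,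
      real_inner_comm, Real.norm_of_nonneg hη.le]
    ring
  have hg2 : ‖g‖ ^ 2 ≤ G ^ 2 := pow_le_pow_left₀ (norm_nonneg g) hg 2
  rw [hexpand]
  field_simp
  nlinarith

variable {u g : ℕ → E} {G : ℝ}

theorem sum_inner_le_of_gradient_steps
    (hstep : ∀ t, 1 ≤ t → u (t + 1) = u t - (1 / (t : ℝ)) • g t)
    (hg : ∀ t, 1 ≤ t → ‖g t‖ ≤ G) (w : E) (T : ℕ) :
    ∑ t ∈ Icc 1 T, ⟪g t, u t - w⟫
      ≤ (∑ t ∈ Icc 1 T, ‖u t - w‖ ^ 2 - T * ‖u (T + 1) - w‖ ^ 2) / 2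
        + G ^ 2 / 2 * ∑ t ∈ Icc 1 T, (t : ℝ)⁻¹ := by
  calc ∑ t ∈ Icc 1 T, ⟪g t, u t - w⟫
      ≤ ∑ t ∈ Icc 1 T, ((t : ℝ) * (‖u t - w‖ ^ 2 - ‖u (t + 1) - w‖ ^ 2) / 2
          + G ^ 2 / 2 * (t : ℝ)⁻¹) := by
        refine sum_le_sum fun t ht => ?_
        have ht : 1 ≤ t := (mem_Icc.1 ht).1
        refine (inner_le_of_gradient_step (by positivity) (hstep t ht) (hg t ht) w).trans_eq ?_
        field_simp
    _ = _ := by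
        rw [sum_add_distrib, ← mul_sum, ← sum_div, sum_Icc_natCast_mul_sub_succ]

theorem eventually_inv_mul_sum_inner_le
    (hstep : ∀ t, 1 ≤ t → u (t + 1) = u t - (1 / (t : ℝ)) • g t)
    (hg : ∀ t, 1 ≤ t → ‖g t‖ ≤ G) {L : E} (hu : Tendsto u atTop (𝓝 L)) (w : E) {ε : ℝ}
    (hε : 0 < ε) :
    ∀ᶠ T : ℕ in atTop, (T : ℝ)⁻¹ * ∑ t ∈ Icc 1 T, ⟪g t, u t - w⟫ ≤ ε := by
  set a : ℕ → ℝ := fun t => ‖u t - w‖ ^ 2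
  have ha : Tendsto a atTop (𝓝 (‖L - w‖ ^ 2)) := ((hu.sub_const w).norm).pow 2
  have hbound : Tendsto (fun T : ℕ => ((T : ℝ)⁻¹ * ∑ t ∈ Icc 1 T, a t - a (T + 1)) / 2
      + G ^ 2 / 2 * ((T : ℝ)⁻¹ * ∑ t ∈ Icc 1 T, (t : ℝ)⁻¹)) atTop (𝓝 0) := by
    simpa using ((ha.cesaro_Icc.sub (ha.comp (tendsto_add_atTop_nat 1))).div_const 2).add
      ((tendsto_inv_atTop_nhds_zero_nat (𝕜 := ℝ)).cesaro_Icc.const_mul (G ^ 2 / 2))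
  filter_upwards [hbound.eventually (gt_mem_nhds hε), eventually_ge_atTop 1] with T hT hT1
  have hT0 : (T : ℝ) ≠ 0 := Nat.cast_ne_zero.2 (by omega)
  calc (T : ℝ)⁻¹ * ∑ t ∈ Icc 1 T, ⟪g t, u t - w⟫
      ≤ (T : ℝ)⁻¹ * ((∑ t ∈ Icc 1 T, a t - T * a (T + 1)) / 2
        + G ^ 2 / 2 * ∑ t ∈ Icc 1 T, (t : ℝ)⁻¹) :=
        mul_le_mul_of_nonneg_left (sum_inner_le_of_gradient_steps hstep hg w T)
          (by positivity)
    _ = ((T : ℝ)⁻¹ * ∑ t ∈ Icc 1 T, a t - a (T + 1)) / 2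
        + G ^ 2 / 2 * ((T : ℝ)⁻¹ * ∑ t ∈ Icc 1 T, (t : ℝ)⁻¹) := by
        field_simp
    _ ≤ ε := hT.le

end InnerProductSpace

theorem sgtsvm_average_objective_eventually_small_general
    (d : ℕ)
    (c1 c2 : ℝ) (hc1 : 0 < c1) (hc2 : 0 < c2)
    (z zhat : ℕ → EuclideanSpace ℝ (Fin d))
    -- the instantaneous SGTSVM objectives f_t = f_{z_t, ẑ_t}
    (f : ℕ → EuclideanSpace ℝ (Fin d) → ℝ)
    (hf : ∀ t x, f t x = (1 / 2) * ‖x‖ ^ 2 + (c1 / 2) * ⟪x, z t⟫ ^ 2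
        + c2 * max 0 (1 + ⟪x, zhat t⟫))
    -- the SGTSVM iteration with the subgradient vector ∇_t of f_t at u_t
    (u g : ℕ → EuclideanSpace ℝ (Fin d))
    (hg : ∀ t, 1 ≤ t →
      g t = u t + (c1 * ⟪u t, z t⟫) • z t
        + (if 0 < 1 + ⟪u t, zhat t⟫ then c2 else 0) • zhat t)
    (hstep : ∀ t, 1 ≤ t → u (t + 1) = u t - (1 / (t : ℝ)) • g t)
    (G2 : ℝ) (hgb : ∀ t, 1 ≤ t → ‖g t‖ ≤ G2)
    (hlim : ∃ L : EuclideanSpace ℝ (Fin d), Tendsto u atTop (nhds L))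
    (ustar : EuclideanSpace ℝ (Fin d))
    (ε : ℝ) (hε : 0 < ε) :
    ∃ T0 : ℕ, ∀ T, T0 ≤ T →
      (1 / (T : ℝ)) * ∑ t ∈ Finset.Icc 1 T, f t (u t)
        ≤ (1 / (T : ℝ)) * ∑ t ∈ Finset.Icc 1 T, f t ustar + ε := by
  obtain ⟨L, hL⟩ := hlim
  obtain ⟨T0, hT0⟩ :=
    eventually_atTop.1 (eventually_inv_mul_sum_inner_le hstep hgb hL ustar hε)
  have hregret : ∀ t, 1 ≤ t → f t (u t) - f t ustar ≤ ⟪g t, u t - ustar⟫ := fun t ht => by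
    rw [hf, hf, hg t ht]
    exact sgtsvmObjective_sub_le_inner hc1.le hc2.le (z t) (zhat t) (u t) ustar
  refine ⟨T0, fun T hT => ?_⟩
  rw [← sub_le_iff_le_add', ← mul_sub, ← sum_sub_distrib, one_div]
  exact (mul_le_mul_of_nonneg_left (sum_le_sum fun t ht => hregret t (mem_Icc.1 ht).1)
    (by positivity)).trans (hT0 T hT)

/-- Theorem 3.2(ii): if the SGTSVM iterates converge, then for every `ε > 0` and all
sufficiently large `T`, the average instantaneous objective at the iterates exceeds its
value at a TWSVM minimizer `u*` by at most `ε`. -/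
theorem sgtsvm_average_objective_eventually_small
    (d m1 m2 : ℕ) (hm1 : 0 < m1) (hm2 : 0 < m2)
    (c1 c2 : ℝ) (hc1 : 0 < c1) (hc2 : 0 < c2)
    (Z1 : Fin m1 → EuclideanSpace ℝ (Fin d)) (Z2 : Fin m2 → EuclideanSpace ℝ (Fin d))
    (z zhat : ℕ → EuclideanSpace ℝ (Fin d))
    (hzmem : ∀ t, 1 ≤ t → ∃ i, z t = Z1 i)
    (hzhmem : ∀ t, 1 ≤ t → ∃ j, zhat t = Z2 j)
    -- the instantaneous SGTSVM objectives f_t = f_{z_t, ẑ_t}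
    (f : ℕ → EuclideanSpace ℝ (Fin d) → ℝ)
    (hf : ∀ t x, f t x = (1 / 2) * ‖x‖ ^ 2 + (c1 / 2) * ⟪x, z t⟫ ^ 2
        + c2 * max 0 (1 + ⟪x, zhat t⟫))
    -- the SGTSVM iteration with the subgradient vector ∇_t of f_t at u_t
    (u g : ℕ → EuclideanSpace ℝ (Fin d))
    (hg : ∀ t, 1 ≤ t →
      g t = u t + (c1 * ⟪u t, z t⟫) • z t
        + (if 0 < 1 + ⟪u t, zhat t⟫ then c2 else 0) • zhat t)
    (hstep : ∀ t, 1 ≤ t → u (t + 1) = u t - (1 / (t : ℝ)) • g t)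
    (G2 : ℝ) (hgb : ∀ t, 1 ≤ t → ‖g t‖ ≤ G2)
    (hlim : ∃ L : EuclideanSpace ℝ (Fin d), Tendsto u atTop (nhds L))
    -- the TWSVM objective and its minimizer u*
    (F : EuclideanSpace ℝ (Fin d) → ℝ)
    (hF : ∀ x, F x = (1 / 2) * ‖x‖ ^ 2
        + (c1 / (2 * (m1 : ℝ))) * ∑ i, ⟪x, Z1 i⟫ ^ 2
        + (c2 / (m2 : ℝ)) * ∑ j, max 0 (1 + ⟪x, Z2 j⟫))
    (ustar : EuclideanSpace ℝ (Fin d)) (hmin : ∀ x, F ustar ≤ F x)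
    (ε : ℝ) (hε : 0 < ε) :
    ∃ T0 : ℕ, ∀ T, T0 ≤ T →
      (1 / (T : ℝ)) * ∑ t ∈ Finset.Icc 1 T, f t (u t)
        ≤ (1 / (T : ℝ)) * ∑ t ∈ Finset.Icc 1 T, f t ustar + ε :=
  sgtsvm_average_objective_eventually_small_general d c1 c2 hc1 hc2 z zhat f hf u g hg hstep G2 hgb
    hlim ustar ε hε
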